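/- arXiv:0906.3231 — 2 statements merged into one kernel-verified Lean document; each statement's English description precedes it below -/
import Mathlib

section
/- Every set of natural numbers generated by a P system with symport/antiport of degree 1 using only symport rules of size at most 2 (minimal symport) is finite; that is, NOP_1(sym_2) ⊆ NFIN. -/
/-- `NRE`: the family of recursively enumerable sets of natural numbers,
i.e., the domains of partial recursive functions. -/
def NRE : Set (Set ℕ) := { S | ∃ f : ℕ →. ℕ, Nat.Partrec f ∧ S = f.Dom }

/-- `NFIN`: the family of finite sets of natural numbers. -/
def NFIN : Set (Set ℕ) := { S | S.Finite }

/-- Rules of a P system with symport/antiport over the alphabet `Fin k`: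
`symIn x` is the symport rule `(x, in)`, `symOut y` is the symport rule
`(y, out)`, and `anti y x` is the antiport rule `(y, out; x, in)`. -/
inductive PRule (k : ℕ) : Type where
  | symIn  (x : Multiset (Fin k)) : PRule k
  | symOut (y : Multiset (Fin k)) : PRule k
  | anti   (y x : Multiset (Fin k)) : PRule k
  deriving DecidableEq

namespace PRule

variable {k : ℕ}

/-- The rule is a symport rule. -/
def IsSym : PRule k → Prop
  | symIn _ => True
  | symOut _ => True
  | anti _ _ => False

/-- The rule is an antiport rule. -/
def IsAnti : PRule k → Prop
  | symIn _ => False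
  | symOut _ => False
  | anti _ _ => True

/-- The size of a rule: `|x|` for a symport rule `(x,in)` or `(x,out)`,
and `max {|y|, |x|}` for an antiport rule `(y,out; x,in)`. -/
def size : PRule k → ℕ
  | symIn x => Multiset.card x
  | symOut y => Multiset.card y
  | anti y x => max (Multiset.card y) (Multiset.card x)

/-- The objects the rule consumes from its own region. -/
def fromSelf : PRule k → Multiset (Fin k)
  | symIn _ => 0
  | symOut y => y
  | anti y _ => y

/-- The objects the rule consumes from the immediately outer region. -/
def fromOuter : PRule k → Multiset (Fin k)
  | symIn x => x
  | symOut _ => 0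
  | anti _ x => x

/-- The objects the rule sends into its own region. -/
def toSelf : PRule k → Multiset (Fin k)
  | symIn x => x
  | symOut _ => 0
  | anti _ x => x

/-- The objects the rule sends into the immediately outer region. -/
def toOuter : PRule k → Multiset (Fin k)
  | symIn _ => 0
  | symOut y => y
  | anti y _ => y

end PRule

/-- A P system with symport/antiport of degree `n` over the alphabet `Fin k`
(so the alphabet `O` has exactly `k` objects).  The membrane structure is a
hierarchy (tree) of nested membranes described by the `parent` map;
`parent i = none` means membrane `i` is the skin membrane, whose outer region
is the environment.  The skin membrane is labelled `0`. -/
structure PSystem (n k : ℕ) : Type where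
  /-- the membrane structure: the immediately outer membrane of each membrane
  (`none` for the skin membrane). -/
  parent : Fin n → Option (Fin n)
  /-- membrane `0` is the unique skin membrane -/
  skin_unique : ∀ i : Fin n, parent i = none ↔ (i : ℕ) = 0
  /-- nesting is well-founded (membranes are numbered outside-in) -/
  parent_lt : ∀ i j : Fin n, parent j = some i → (i : ℕ) < (j : ℕ)
  /-- the initial multiset of each region -/
  w : Fin n → Multiset (Fin k)
  /-- the objects occurring in the environment in infinitely many copies -/
  E : Finset (Fin k)
  /-- the finite set of rules of each region -/
  rules : Fin n → Finset (PRule k)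
  /-- symport rules `(x, in)` with `x ∈ E*` are forbidden at the skin membrane -/
  skin_ok : ∀ i : Fin n, parent i = none →
      ∀ x, PRule.symIn x ∈ rules i → ¬ (∀ a ∈ x, a ∈ E)
  /-- the output membrane -/
  i0 : Fin n
  /-- the output membrane is elementary -/
  i0_elem : ∀ j : Fin n, parent j ≠ some i0

/-- A configuration of a P system of degree `n` over alphabet `Fin k`:
the contents of each region, together with the finite part of the environment
(objects of `E` are present in the environment in infinitely many copies
and need not be tracked; all other objects occur in the environment in the
finite multiset `env`). -/
structure PConfig (n k : ℕ) : Type where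
  regions : Fin n → Multiset (Fin k)
  env : Multiset (Fin k)

namespace PSystem

/-- A selection of rule instances to be applied simultaneously:
a multiset of rules for each region. -/
abbrev RuleSel (n k : ℕ) := Fin n → Multiset (PRule k)

variable {n k : ℕ} (P : PSystem n k)

/-- The multiset of objects a selection of rule instances removes from region `j`. -/
def demand (R : RuleSel n k) (j : Fin n) : Multiset (Fin k) :=
  ((R j).map PRule.fromSelf).sum +
    ∑ i ∈ Finset.univ.filter (fun i => P.parent i = some j),
      ((R i).map PRule.fromOuter).sum

/-- The multiset of objects a selection of rule instances removes from the environment. -/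
def envDemand (R : RuleSel n k) : Multiset (Fin k) :=
  ∑ i ∈ Finset.univ.filter (fun i => P.parent i = none),
    ((R i).map PRule.fromOuter).sum

/-- The multiset of objects a selection of rule instances puts into region `j`. -/
def supply (R : RuleSel n k) (j : Fin n) : Multiset (Fin k) :=
  ((R j).map PRule.toSelf).sum +
    ∑ i ∈ Finset.univ.filter (fun i => P.parent i = some j),
      ((R i).map PRule.toOuter).sum

/-- The multiset of objects a selection of rule instances puts into the environment. -/
def envSupply (R : RuleSel n k) : Multiset (Fin k) :=
  ∑ i ∈ Finset.univ.filter (fun i => P.parent i = none),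
    ((R i).map PRule.toOuter).sum

/-- A selection of rule instances is applicable in configuration `c`: it uses
only rules of the system, and all consumed objects are available (objects of
`E` are available in the environment in any quantity). -/
def Applicable (c : PConfig n k) (R : RuleSel n k) : Prop :=
  (∀ j : Fin n, ∀ r ∈ R j, r ∈ P.rules j) ∧
  (∀ j : Fin n, P.demand R j ≤ c.regions j) ∧
  (∀ a : Fin k, a ∉ P.E → (P.envDemand R).count a ≤ c.env.count a)

/-- The configuration obtained by applying a selection of rule instances. -/
def applySel (c : PConfig n k) (R : RuleSel n k) : PConfig n k where
  regions := fun j => c.regions j - P.demand R j + P.supply R j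
  env := c.env - P.envDemand R + P.envSupply R

/-- The selection `R` is applicable and maximal: no further rule instance can
be added while remaining applicable. -/
def MaxApplicable (c : PConfig n k) (R : RuleSel n k) : Prop :=
  P.Applicable c R ∧
    ∀ (j : Fin n) (r : PRule k), r ∈ P.rules j →
      ¬ P.Applicable c (Function.update R j (R j + {r}))

/-- One computation step: a non-empty maximal applicable selection of rule
instances is applied (non-deterministic maximal parallelism). -/
def Step (c c' : PConfig n k) : Prop :=
  ∃ R : RuleSel n k, P.MaxApplicable c R ∧ (∃ j, R j ≠ 0) ∧ c' = P.applySel c R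

/-- A configuration is halting when no rule instance is applicable in it. -/
def Halted (c : PConfig n k) : Prop :=
  ∀ (j : Fin n) (r : PRule k), r ∈ P.rules j →
    ¬ P.Applicable c (Function.update (fun _ => (0 : Multiset (PRule k))) j {r})

/-- The initial configuration: region `i` contains `w i` and the environment
contains nothing besides the objects of `E`. -/
def init : PConfig n k := ⟨P.w, 0⟩

/-- Reachability by computation steps. -/
def Reaches : PConfig n k → PConfig n k → Prop :=
  Relation.ReflTransGen P.Step

/-- `N(Π)`: the set of natural numbers computed by the system, i.e., the
numbers of objects present in the output region in the halting configurations
reachable from the initial configuration. -/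
def NSet : Set ℕ :=
  { m | ∃ c : PConfig n k, P.Reaches P.init c ∧ P.Halted c ∧
      Multiset.card (c.regions P.i0) = m }

/-- All symport rules of the system have size at most `r`. -/
def SymBound (r : ℕ) : Prop :=
  ∀ i : Fin n, ∀ ru ∈ P.rules i, ru.IsSym → ru.size ≤ r

/-- All antiport rules of the system have size at most `t`. -/
def AntiBound (t : ℕ) : Prop :=
  ∀ i : Fin n, ∀ ru ∈ P.rules i, ru.IsAnti → ru.size ≤ t

/-- The system uses only symport rules. -/
def SymOnly : Prop := ∀ i : Fin n, ∀ ru ∈ P.rules i, ru.IsSym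

/-- The system uses only antiport rules. -/
def AntiOnly : Prop := ∀ i : Fin n, ∀ ru ∈ P.rules i, ru.IsAnti

/-- The system is deterministic: from every reachable configuration at most
one (maximally parallel) computation step is possible. -/
def Deterministic : Prop :=
  ∀ c : PConfig n k, P.Reaches P.init c →
    ∀ c₁ c₂, P.Step c c₁ → P.Step c c₂ → c₁ = c₂

/-- The total number of objects present in the system (inside the skin membrane). -/
def totalObjects (c : PConfig n k) : ℕ := ∑ i : Fin n, Multiset.card (c.regions i)

end PSystem

/-- `NOP_n(sym_r, anti_t)`: the family of sets of natural numbers generated by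
P systems with symport/antiport of degree at most `n`, with symport rules of
size at most `r` and antiport rules of size at most `t`. -/
def NOP (n r t : ℕ) : Set (Set ℕ) :=
  { S | ∃ m : ℕ, 1 ≤ m ∧ m ≤ n ∧ ∃ (k : ℕ) (P : PSystem m k),
      P.SymBound r ∧ P.AntiBound t ∧ S = P.NSet }

/-- `NOP_n(sym_r)`: the family of sets of natural numbers generated by
P systems with symport/antiport of degree at most `n` using only symport rules
of size at most `r`. -/
def NOPsym (n r : ℕ) : Set (Set ℕ) :=
  { S | ∃ m : ℕ, 1 ≤ m ∧ m ≤ n ∧ ∃ (k : ℕ) (P : PSystem m k),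
      P.SymOnly ∧ P.SymBound r ∧ S = P.NSet }

/-- `NOP_n(anti_t)`: the family of sets of natural numbers generated by
P systems with symport/antiport of degree at most `n` using only antiport
rules of size at most `t`. -/
def NOPanti (n t : ℕ) : Set (Set ℕ) :=
  { S | ∃ m : ℕ, 1 ≤ m ∧ m ≤ n ∧ ∃ (k : ℕ) (P : PSystem m k),
      P.AntiOnly ∧ P.AntiBound t ∧ S = P.NSet }

/-!
With one membrane the objects outside `E` are conserved: `u a + v a = w a` for the region `u`,
the finite environment `v` and the initial multiset `w`. Let `I` and `O` be the objects carried in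
and out over the whole computation, so that `u + O = w + I`. In a halting configuration every rule
ever applied is blocked, and a rule of size at most `2` that was once applicable can only be
blocked in a balanced way: a blocked `(x, in)` has at least as many objects of species `a ∉ E`
missing from the environment as objects of `E` or of species missing from the region, and a
blocked `(y, out)` has at least as many objects of species missing from the region as objects of
species `a ∉ E` missing from the environment. Write `#S X` for the number of objects of `X`
whose species lies in `S`, and let `A = {a ∉ E | v a = 0}`, `Z = {a | u a = 0}`. Summing over all
rule applications, `#(E ∪ Z) I ≤ #A I = #A O ≤ #Z O ≤ |w| + #Z I`, so at most `|w|`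
objects of `E` were carried in of species still present, and `|u| ≤ 2 |w|`.
-/

namespace Multiset

variable {α : Type*} {p q : α → Prop} [DecidablePred p] [DecidablePred q]

theorem countP_le_countP_of_count_le [DecidableEq α] {s t : Multiset α}
    (h : ∀ a, p a → s.count a ≤ t.count a) : s.countP p ≤ t.countP p := by
  rw [countP_eq_card_filter, countP_eq_card_filter]
  refine card_le_card (le_iff_count.2 fun a => ?_)
  simp only [count_filter]
  split_ifs with ha
  exacts [h a ha, le_rfl]

theorem countP_le_countP_of_card_le_two {s : Multiset α} (hs : card s ≤ 2)
    (hpq : ∀ a ∈ s, p a → ¬q a) (hq : ∃ a ∈ s, q a) : s.countP p ≤ s.countP q := by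
  have hq_pos : 0 < s.countP q := countP_pos.2 hq
  have hq_le : s.countP q ≤ s.countP (fun a => ¬p a) :=
    calc s.countP q = s.countP (fun a => q a ∧ ¬p a) :=
          countP_congr rfl fun a ha =>
            propext ⟨fun hqa => ⟨hqa, fun hpa => hpq a ha hpa hqa⟩, And.left⟩
      _ ≤ s.countP (fun a => ¬p a) := by
          rw [countP_eq_card_filter, countP_eq_card_filter]
          exact card_le_card (monotone_filter_right s fun _ => And.right)
  have := card_eq_countP_add_countP p s
  omega

theorem countP_eq_zero_of_card_le_count [DecidableEq α] {s : Multiset α} {o : α}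
    (hs : card s ≤ s.count o) (ho : ¬p o) : s.countP p = 0 :=
  countP_eq_zero.2 fun a ha hpa =>
    ho ((count_eq_card.1 (le_antisymm (count_le_card o s) hs) a ha) ▸ hpa)

theorem countP_sum_map_le_countP_sum_map {β : Type*} (C : Multiset β) (f : β → Multiset α)
    (h : ∀ r ∈ C, (f r).countP p ≤ (f r).countP q) :
    (C.map f).sum.countP p ≤ (C.map f).sum.countP q := by
  rw [← coe_countPAddMonoidHom, ← coe_countPAddMonoidHom, map_multiset_sum, map_multiset_sum,
    map_map, map_map]
  exact sum_map_le_sum_map _ _ h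

end Multiset

open Multiset

section Blocking

variable {α : Type*} [DecidableEq α] {E : Finset α} {u v w : Multiset α}

theorem countP_le_countP_of_blocked_in (hcons : ∀ a ∉ E, u.count a + v.count a = w.count a)
    {x : Multiset α} (hx : card x ≤ 2) (hxw : ∀ a ∉ E, x.count a ≤ w.count a)
    (hblock : ¬∀ a ∉ E, x.count a ≤ v.count a) :
    x.countP (fun a => a ∈ E ∨ u.count a = 0) ≤
      x.countP (fun a => a ∉ E ∧ v.count a = 0) := by
  push Not at hblock
  obtain ⟨o, hoE, ho⟩ := hblock
  by_cases hvo : v.count o = 0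
  · refine countP_le_countP_of_card_le_two hx ?_ ⟨o, count_pos.1 (by omega), hoE, hvo⟩
    rintro a hax (haE | hua) ⟨haE', hva⟩
    · exact haE' haE
    · have := count_pos.2 hax
      have := hcons a haE'
      have := hxw a haE'
      omega
  · rw [countP_eq_zero_of_card_le_count (o := o) (by omega)]
    · exact Nat.zero_le _
    rintro (h | huo)
    · exact hoE h
    · have := hcons o hoE
      have := hxw o hoE
      omega

theorem countP_le_countP_of_blocked_out (hcons : ∀ a ∉ E, u.count a + v.count a = w.count a)
    {y : Multiset α} (hy : card y ≤ 2) (hyw : ∀ a ∉ E, y.count a ≤ w.count a)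
    (hblock : ¬y ≤ u) :
    y.countP (fun a => a ∉ E ∧ v.count a = 0) ≤ y.countP (fun a => u.count a = 0) := by
  rw [le_iff_count] at hblock
  push Not at hblock
  obtain ⟨o, ho⟩ := hblock
  by_cases huo : u.count o = 0
  · refine countP_le_countP_of_card_le_two hy ?_ ⟨o, count_pos.1 (by omega), huo⟩
    rintro a hay ⟨haE, hva⟩ hua
    have := count_pos.2 hay
    have := hcons a haE
    have := hyw a haE
    omega
  · rw [countP_eq_zero_of_card_le_count (o := o) (by omega)]
    · exact Nat.zero_le _
    rintro ⟨hoE, hvo⟩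
    have := hcons o hoE
    have := hyw o hoE
    omega

theorem card_le_two_mul_card_of_balance (hcons : ∀ a ∉ E, u.count a + v.count a = w.count a)
    {I O : Multiset α} (hbal : u + O = w + I)
    (hin : I.countP (fun a => a ∈ E ∨ u.count a = 0) ≤
      I.countP (fun a => a ∉ E ∧ v.count a = 0))
    (hout : O.countP (fun a => a ∉ E ∧ v.count a = 0) ≤ O.countP (fun a => u.count a = 0)) :
    card u ≤ 2 * card w := by
  have hcount (a : α) : u.count a + O.count a = w.count a + I.count a := by
    simpa using congrArg (count a) hbal
  have hA : I.countP (fun a => a ∉ E ∧ v.count a = 0) ≤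
      O.countP (fun a => a ∉ E ∧ v.count a = 0) :=
    countP_le_countP_of_count_le fun a ⟨haE, hva⟩ => by
      have := hcount a
      have := hcons a haE
      omega
  have hZ : O.countP (fun a => u.count a = 0) ≤
      w.countP (fun a => u.count a = 0) + I.countP (fun a => u.count a = 0) := by
    rw [← countP_add]
    exact countP_le_countP_of_count_le fun a hua => by
      have := hcount a
      simp only [count_add]
      omega
  have hsplit : I.countP (fun a => a ∈ E ∨ u.count a = 0) =
      I.countP (fun a => u.count a = 0) + I.countP (fun a => a ∈ E ∧ u.count a ≠ 0) := by
    rw [countP_eq_countP_filter_add I _ (fun a => u.count a = 0), countP_filter, countP_filter]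
    congr 1 <;> exact countP_congr rfl fun a _ => propext (by tauto)
  have hu : u ≤ w + I.filter (fun a => a ∈ E ∧ u.count a ≠ 0) := by
    refine le_iff_count.2 fun a => ?_
    have := hcount a
    rw [count_add, count_filter]
    split_ifs with ha
    · omega
    · by_cases haE : a ∈ E
      · have : u.count a = 0 := by tauto
        omega
      · have := hcons a haE
        omega
  have := card_le_card hu
  rw [card_add, ← countP_eq_card_filter] at this
  have := countP_le_card (fun a => u.count a = 0) w
  omega

end Blocking

namespace PRule

variable {k : ℕ}

theorem toSelf_eq_fromOuter (r : PRule k) : r.toSelf = r.fromOuter := by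
  cases r <;> rfl

theorem toOuter_eq_fromSelf (r : PRule k) : r.toOuter = r.fromSelf := by
  cases r <;> rfl

end PRule

namespace PSystem

variable {k : ℕ} (P : PSystem 1 k)

theorem parent_eq_none (i : Fin 1) : P.parent i = none :=
  (P.skin_unique i).2 (Fin.val_eq_zero i)

theorem demand_eq_sum_fromSelf (R : RuleSel 1 k) (j : Fin 1) :
    P.demand R j = ((R j).map PRule.fromSelf).sum := by
  simp [demand, parent_eq_none]

theorem supply_eq_sum_fromOuter (R : RuleSel 1 k) (j : Fin 1) :
    P.supply R j = ((R j).map PRule.fromOuter).sum := by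
  simp [supply, parent_eq_none, PRule.toSelf_eq_fromOuter]

theorem envDemand_eq_sum_fromOuter (R : RuleSel 1 k) :
    P.envDemand R = ((R 0).map PRule.fromOuter).sum := by
  simp [envDemand, parent_eq_none]

theorem envSupply_eq_sum_fromSelf (R : RuleSel 1 k) :
    P.envSupply R = ((R 0).map PRule.fromSelf).sum := by
  simp [envSupply, parent_eq_none, PRule.toOuter_eq_fromSelf]

theorem applicable_iff (c : PConfig 1 k) (R : RuleSel 1 k) :
    P.Applicable c R ↔ (∀ r ∈ R 0, r ∈ P.rules 0) ∧
      ((R 0).map PRule.fromSelf).sum ≤ c.regions 0 ∧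
      ∀ a ∉ P.E, ((R 0).map PRule.fromOuter).sum.count a ≤ c.env.count a := by
  simp only [Applicable, Fin.forall_fin_one, demand_eq_sum_fromSelf, envDemand_eq_sum_fromOuter]

variable {P} in
theorem Halted.blocked {c : PConfig 1 k} (hH : P.Halted c) {r : PRule k}
    (hr : r ∈ P.rules 0) :
    ¬(r.fromSelf ≤ c.regions 0 ∧ ∀ a ∉ P.E, r.fromOuter.count a ≤ c.env.count a) := by
  intro h
  refine hH 0 r hr ((P.applicable_iff c _).2 ?_)
  simpa [hr] using h

theorem applySel_regions (c : PConfig 1 k) (R : RuleSel 1 k) :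
    (P.applySel c R).regions 0 =
      c.regions 0 - ((R 0).map PRule.fromSelf).sum + ((R 0).map PRule.fromOuter).sum := by
  simp only [applySel, demand_eq_sum_fromSelf, supply_eq_sum_fromOuter]

theorem applySel_env (c : PConfig 1 k) (R : RuleSel 1 k) :
    (P.applySel c R).env =
      c.env - ((R 0).map PRule.fromOuter).sum + ((R 0).map PRule.fromSelf).sum := by
  simp only [applySel, envDemand_eq_sum_fromOuter, envSupply_eq_sum_fromSelf]

theorem count_regions_add_count_env_of_reaches {c : PConfig 1 k} (h : P.Reaches P.init c) :
    ∀ a ∉ P.E, (c.regions 0).count a + c.env.count a = (P.w 0).count a := by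
  induction h with
  | refl => simp [init]
  | tail _ hstep ih =>
    obtain ⟨R, ⟨happ, -⟩, -, rfl⟩ := hstep
    obtain ⟨-, hself, hout⟩ := (P.applicable_iff _ R).1 happ
    intro a ha
    have := count_le_of_le a hself
    have := hout a ha
    have := ih a ha
    simp only [applySel_regions, applySel_env, count_add, count_sub]
    omega

/-- `C` stands for the multiset of all rule instances applied on the way from the initial
configuration to `c`. -/
structure IsHistory (c : PConfig 1 k) (C : Multiset (PRule k)) : Prop where
  mem_rules : ∀ r ∈ C, r ∈ P.rules 0
  count_fromSelf_le : ∀ r ∈ C, ∀ a ∉ P.E, r.fromSelf.count a ≤ (P.w 0).count a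
  count_fromOuter_le : ∀ r ∈ C, ∀ a ∉ P.E, r.fromOuter.count a ≤ (P.w 0).count a
  balance : c.regions 0 + (C.map PRule.fromSelf).sum = P.w 0 + (C.map PRule.fromOuter).sum

variable {P} in
theorem IsHistory.step {c c' : PConfig 1 k} {C : Multiset (PRule k)} (hC : P.IsHistory c C)
    (hcons : ∀ a ∉ P.E, (c.regions 0).count a + c.env.count a = (P.w 0).count a)
    (hstep : P.Step c c') : ∃ C', P.IsHistory c' C' := by
  obtain ⟨R, ⟨happ, -⟩, -, rfl⟩ := hstep
  obtain ⟨hrules, hself, hout⟩ := (P.applicable_iff c R).1 happ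
  refine ⟨C + R 0, ⟨?_, ?_, ?_, ?_⟩⟩
  · intro r hr
    rcases mem_add.1 hr with hr | hr
    exacts [hC.mem_rules r hr, hrules r hr]
  · intro r hr a ha
    rcases mem_add.1 hr with hr | hr
    · exact hC.count_fromSelf_le r hr a ha
    have := count_le_of_le a (le_sum_of_mem (mem_map_of_mem PRule.fromSelf hr))
    have := count_le_of_le a hself
    have := hcons a ha
    omega
  · intro r hr a ha
    rcases mem_add.1 hr with hr | hr
    · exact hC.count_fromOuter_le r hr a ha
    have := count_le_of_le a (le_sum_of_mem (mem_map_of_mem PRule.fromOuter hr))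
    have := hout a ha
    have := hcons a ha
    omega
  · rw [applySel_regions, map_add, map_add, sum_add, sum_add, ← add_assoc (P.w 0),
      ← hC.balance]
    calc _ = c.regions 0 - ((R 0).map PRule.fromSelf).sum + ((R 0).map PRule.fromSelf).sum +
          (C.map PRule.fromSelf).sum + ((R 0).map PRule.fromOuter).sum := by ac_rfl
      _ = _ := by rw [tsub_add_cancel_of_le hself]

theorem exists_isHistory_of_reaches {c : PConfig 1 k} (h : P.Reaches P.init c) :
    ∃ C, P.IsHistory c C := by
  induction h with
  | refl => exact ⟨0, ⟨by simp, by simp, by simp, by simp [init]⟩⟩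
  | tail hreach hstep ih =>
    obtain ⟨C, hC⟩ := ih
    exact hC.step (P.count_regions_add_count_env_of_reaches hreach) hstep

theorem card_regions_le_of_halted (hsym : P.SymOnly) (hbd : P.SymBound 2) {c : PConfig 1 k}
    (hreach : P.Reaches P.init c) (hH : P.Halted c) :
    card (c.regions 0) ≤ 2 * card (P.w 0) := by
  obtain ⟨C, hC⟩ := P.exists_isHistory_of_reaches hreach
  have hcons := P.count_regions_add_count_env_of_reaches hreach
  refine card_le_two_mul_card_of_balance hcons hC.balance ?_ ?_
  · refine countP_sum_map_le_countP_sum_map C _ fun r hr => ?_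
    have hrP := hC.mem_rules r hr
    cases r with
    | symIn x =>
      exact countP_le_countP_of_blocked_in hcons (hbd 0 _ hrP trivial) (hC.count_fromOuter_le _ hr)
        fun h => hH.blocked hrP ⟨zero_le _, h⟩
    | symOut y => simp [PRule.fromOuter]
    | anti y x => exact (hsym 0 _ hrP).elim
  · refine countP_sum_map_le_countP_sum_map C _ fun r hr => ?_
    have hrP := hC.mem_rules r hr
    cases r with
    | symIn x => simp [PRule.fromSelf]
    | symOut y =>
      exact countP_le_countP_of_blocked_out hcons (hbd 0 _ hrP trivial) (hC.count_fromSelf_le _ hr)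
        fun h => hH.blocked hrP ⟨h, fun a _ => by simp [PRule.fromOuter]⟩
    | anti y x => exact (hsym 0 _ hrP).elim

end PSystem

/-- `NOP_1(sym_2) ⊆ NFIN`: every set of natural numbers
generated by a P system with symport/antiport of degree 1 using only symport
rules of size at most 2 (minimal symport) is finite. -/
theorem NOP_one_sym_two_subset_NFIN : NOPsym 1 2 ⊆ NFIN := by
  rintro S ⟨m, hm1, hm2, k, P, hsym, hbd, rfl⟩
  obtain rfl : m = 1 := le_antisymm hm2 hm1
  refine (Set.finite_Iic (2 * card (P.w 0))).subset ?_
  rintro _ ⟨c, hreach, hH, rfl⟩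
  rw [Subsingleton.elim P.i0 0]
  exact P.card_regions_le_of_halted hsym hbd hreach hH
end

section
/- Every set of natural numbers computed by a tissue P system of degree 1 whose symport rules have size at most 1 and whose antiport rules have size at most 2, or by a tissue P system of degree 1 using only symport rules of size at most 2, is finite; that is, NOtP_1(sym_1, anti_2) ∪ NOtP_1(sym_2) ⊆ NFIN. -/
/-- Rules of a tissue P system with symport/antiport with `n` cells over the
alphabet `Fin k`.  Nodes are elements of `Fin (n+1)`, node `0` being the
environment.  `sym i j x` is the symport rule `(i, x, j)` moving the multiset
`x` from node `i` to node `j`; `anti i j x y` is the antiport rule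
`(i, x/y, j)` exchanging the multiset `x` in node `i` with the multiset `y`
in node `j`. -/
inductive TRule (n k : ℕ) : Type where
  | sym (i j : Fin (n+1)) (x : Multiset (Fin k)) : TRule n k
  | anti (i j : Fin (n+1)) (x y : Multiset (Fin k)) : TRule n k
  deriving DecidableEq

namespace TRule

variable {n k : ℕ}

/-- The rule is a symport rule. -/
def IsSym : TRule n k → Prop
  | sym _ _ _ => True
  | anti _ _ _ _ => False

/-- The rule is an antiport rule. -/
def IsAnti : TRule n k → Prop
  | sym _ _ _ => False
  | anti _ _ _ _ => True

/-- The size of a rule: `|x|` for a symport rule `(i,x,j)` and `|x| + |y|`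
for an antiport rule `(i,x/y,j)`. -/
def size : TRule n k → ℕ
  | sym _ _ x => Multiset.card x
  | anti _ _ x y => Multiset.card x + Multiset.card y

/-- The objects the rule consumes at node `v`. -/
def consume : TRule n k → Fin (n+1) → Multiset (Fin k)
  | sym i _ x, v => if v = i then x else 0
  | anti i j x y, v => (if v = i then x else 0) + (if v = j then y else 0)

/-- The objects the rule produces at node `v`. -/
def produce : TRule n k → Fin (n+1) → Multiset (Fin k)
  | sym _ j x, v => if v = j then x else 0
  | anti i j x y, v => (if v = i then y else 0) + (if v = j then x else 0)

/-- The first node of the rule. -/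
def src : TRule n k → Fin (n+1)
  | sym i _ _ => i
  | anti i _ _ _ => i

/-- The second node of the rule. -/
def dst : TRule n k → Fin (n+1)
  | sym _ j _ => j
  | anti _ j _ _ => j

end TRule

/-- A tissue P system with symport/antiport of degree `n` (that is, with `n`
cells) over the alphabet `Fin k` (so the alphabet `O` has exactly `k`
objects).  The nodes of the underlying graph are `0, …, n`, node `0` being
the environment; the graph itself is deduced from the set of rules. -/
structure TPSystem (n k : ℕ) : Type where
  /-- the initial multiset of each cell -/
  w : Fin n → Multiset (Fin k)
  /-- the objects occurring in the environment in infinitely many copies -/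
  E : Finset (Fin k)
  /-- the finite set of rules -/
  rules : Finset (TRule n k)
  /-- rules move non-empty multisets between distinct nodes, and symport
  rules `(0, x, j)` with `x ∈ E⁺` are forbidden -/
  rules_ok : ∀ r ∈ rules,
    (match r with
      | TRule.sym i j x => i ≠ j ∧ x ≠ 0 ∧ ¬ (i = 0 ∧ ∀ a ∈ x, a ∈ E)
      | TRule.anti i j x y => i ≠ j ∧ x ≠ 0 ∧ y ≠ 0)
  /-- the output cell -/
  i0 : Fin n

/-- A configuration of a tissue P system: the contents of each node.  For the
environment (node `0`) only the finitely-occurring objects are recorded;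
objects of `E` are present there in infinitely many copies. -/
abbrev TConfig (n k : ℕ) := Fin (n+1) → Multiset (Fin k)

namespace TPSystem

variable {n k : ℕ} (P : TPSystem n k)

/-- The multiset of objects a multiset of rule instances removes from node `v`. -/
def demand (R : Multiset (TRule n k)) (v : Fin (n+1)) : Multiset (Fin k) :=
  (R.map (fun r => r.consume v)).sum

/-- The multiset of objects a multiset of rule instances puts into node `v`. -/
def supply (R : Multiset (TRule n k)) (v : Fin (n+1)) : Multiset (Fin k) :=
  (R.map (fun r => r.produce v)).sum

/-- A multiset of rule instances is applicable in configuration `c`: it uses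
only rules of the system and all consumed objects are available (objects of
`E` are available in the environment in any quantity). -/
def Applicable (c : TConfig n k) (R : Multiset (TRule n k)) : Prop :=
  (∀ r ∈ R, r ∈ P.rules) ∧
  (∀ v : Fin (n+1), v ≠ 0 → demand R v ≤ c v) ∧
  (∀ a : Fin k, a ∉ P.E → (demand R 0).count a ≤ (c 0).count a)

/-- The configuration obtained by applying a multiset of rule instances. -/
def applySel (c : TConfig n k) (R : Multiset (TRule n k)) : TConfig n k :=
  fun v => c v - demand R v + supply R v

/-- The multiset of rule instances `R` is applicable and maximal: no further
rule instance can be added while remaining applicable. -/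
def MaxApplicable (c : TConfig n k) (R : Multiset (TRule n k)) : Prop :=
  P.Applicable c R ∧ ∀ r ∈ P.rules, ¬ P.Applicable c (R + {r})

/-- One computation step: a non-empty maximal applicable multiset of rule
instances is applied (non-deterministic maximal parallelism). -/
def Step (c c' : TConfig n k) : Prop :=
  ∃ R : Multiset (TRule n k), P.MaxApplicable c R ∧ R ≠ 0 ∧ c' = applySel c R

/-- A configuration is halting when no rule instance is applicable in it. -/
def Halted (c : TConfig n k) : Prop :=
  ∀ r ∈ P.rules, ¬ P.Applicable c {r}

/-- The initial configuration: cell `i` contains `w i`, the environment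
contains nothing besides the objects of `E`. -/
def init : TConfig n k := Fin.cons 0 P.w

/-- Reachability by computation steps. -/
def Reaches : TConfig n k → TConfig n k → Prop :=
  Relation.ReflTransGen P.Step

/-- The set of natural numbers computed by the system, i.e., the numbers of
objects present in the output cell in the halting configurations reachable
from the initial configuration. -/
def NSet : Set ℕ :=
  { m | ∃ c : TConfig n k, P.Reaches P.init c ∧ P.Halted c ∧
      Multiset.card (c P.i0.succ) = m }

/-- All symport rules of the system have size at most `p`. -/
def SymBound (p : ℕ) : Prop := ∀ r ∈ P.rules, r.IsSym → r.size ≤ p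

/-- All antiport rules of the system have size at most `q`. -/
def AntiBound (q : ℕ) : Prop := ∀ r ∈ P.rules, r.IsAnti → r.size ≤ q

/-- The system uses only symport rules. -/
def SymOnly : Prop := ∀ r ∈ P.rules, r.IsSym

/-- The system uses only antiport rules. -/
def AntiOnly : Prop := ∀ r ∈ P.rules, r.IsAnti

end TPSystem

/-- `NOtP_n(sym_p, anti_q)`: the family of sets of natural numbers computed by
tissue P systems with symport/antiport of degree at most `n`, with symport
rules of size at most `p` and antiport rules of size at most `q`. -/
def NOtP (n p q : ℕ) : Set (Set ℕ) :=
  { S | ∃ m : ℕ, 1 ≤ m ∧ m ≤ n ∧ ∃ (k : ℕ) (P : TPSystem m k),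
      P.SymBound p ∧ P.AntiBound q ∧ S = P.NSet }

/-- `NOtP_n(sym_p)`: the family of sets of natural numbers computed by tissue
P systems with symport/antiport of degree at most `n` using only symport rules
of size at most `p`. -/
def NOtPsym (n p : ℕ) : Set (Set ℕ) :=
  { S | ∃ m : ℕ, 1 ≤ m ∧ m ≤ n ∧ ∃ (k : ℕ) (P : TPSystem m k),
      P.SymOnly ∧ P.SymBound p ∧ S = P.NSet }

/-- `NOtP_n(anti_q)`: the family of sets of natural numbers computed by tissue
P systems with symport/antiport of degree at most `n` using only antiport
rules of size at most `q`. -/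
def NOtPanti (n q : ℕ) : Set (Set ℕ) :=
  { S | ∃ m : ℕ, 1 ≤ m ∧ m ≤ n ∧ ∃ (k : ℕ) (P : TPSystem m k),
      P.AntiOnly ∧ P.AntiBound q ∧ S = P.NSet }

/-!
Let `c` be a halting configuration reached from the initial one. Objects outside `E` are
conserved, so every rule that ever fires consumes only objects of which `c` holds enough
copies. Weigh a configuration `d` by `|d₁| + ∑_{t ∈ d₀} β t`, where `β` vanishes on `E` and
otherwise `β t = [t ∉ c₀] + [t ∈ c₁]`. Since no rule is applicable in `c`, a check of the
possible rules (an import or export of at most two objects, or the exchange of one object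
of the cell with one of the environment) shows that no rule increases the weight. Hence the
output `|c₁|` is at most the weight of `c`, which is at most the weight of the initial
configuration, the number of objects initially in the cell.
-/

open Multiset

namespace Multiset

variable {α : Type*}

theorem sum_map_eq_sum_map_filter {f : α → ℕ} {p : α → Prop} [DecidablePred p]
    (hf : ∀ a, p a → f a = 0) (x : Multiset α) :
    (x.map f).sum = ((x.filter (¬ p ·)).map f).sum := by
  conv_lhs => rw [← filter_add_not p x]
  simp only [map_add, sum_add, add_eq_right]
  exact sum_eq_zero fun b hb => by
    obtain ⟨a, ha, rfl⟩ := mem_map.1 hb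
    exact hf a (of_mem_filter ha)

variable [DecidableEq α]

theorem sum_map_eq_count_mul_add_filter_ne (x : Multiset α) (t : α) (f : α → ℕ) :
    (x.map f).sum = x.count t * f t + ((x.filter (· ≠ t)).map f).sum := by
  conv_lhs => rw [← filter_add_not (· = t) x, filter_eq']
  simp

theorem card_eq_count_add_card_filter_ne (x : Multiset α) (t : α) :
    card x = x.count t + card (x.filter (· ≠ t)) := by
  conv_lhs => rw [← filter_add_not (· = t) x, filter_eq']
  simp

theorem sum_map_tsub_add {f : α → ℕ} {p : α → Prop} [DecidablePred p]
    (hf : ∀ a, p a → f a = 0) {s t : Multiset α} (hts : ∀ a, ¬ p a → t.count a ≤ s.count a)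
    (u : Multiset α) :
    ((s - t + u).map f).sum + (t.map f).sum = (s.map f).sum + (u.map f).sum := by
  have hle : t.filter (¬ p ·) ≤ s.filter (¬ p ·) :=
    le_iff_count.2 fun a => by by_cases ha : p a <;> simp [ha, hts]
  simp only [sum_map_eq_sum_map_filter hf (s - t + u), sum_map_eq_sum_map_filter hf t,
    sum_map_eq_sum_map_filter hf s, sum_map_eq_sum_map_filter hf u, filter_add, filter_sub,
    ← sum_add, ← map_add, add_right_comm _ _ (t.filter _), tsub_add_cancel_of_le hle]

end Multiset

namespace TRule

variable {n k : ℕ}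

theorem sum_consume_eq_sum_produce (r : TRule n k) : ∑ v, r.consume v = ∑ v, r.produce v := by
  cases r <;> simp [consume, produce, Finset.sum_add_distrib, add_comm]

end TRule

namespace TPSystem

variable {n k : ℕ}

def Affordable (P : TPSystem n k) (d : TConfig n k) (r : TRule n k) : Prop :=
  ∀ a ∉ P.E, (∑ v, r.consume v).count a ≤ (∑ v, d v).count a

variable {P : TPSystem n k} {R : Multiset (TRule n k)} {r : TRule n k} {c d d' : TConfig n k}

theorem demand_cons : demand (r ::ₘ R) = r.consume + demand R := by
  ext1 v; simp [demand]

theorem supply_cons : supply (r ::ₘ R) = r.produce + supply R := by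
  ext1 v; simp [supply]

theorem sum_demand_eq_sum_supply (R : Multiset (TRule n k)) :
    ∑ v, demand R v = ∑ v, supply R v := by
  induction R using Multiset.induction_on with
  | empty => simp [demand, supply]
  | cons r R ih =>
    simp only [demand_cons, supply_cons, Pi.add_apply, Finset.sum_add_distrib, ih,
      r.sum_consume_eq_sum_produce]

theorem consume_le_demand (hr : r ∈ R) (v : Fin (n+1)) : r.consume v ≤ demand R v :=
  le_sum_of_mem (mem_map_of_mem (fun r => r.consume v) hr)

theorem Applicable.count_demand_le (h : P.Applicable d R) {a : Fin k} (ha : a ∉ P.E)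
    (v : Fin (n+1)) : (demand R v).count a ≤ (d v).count a := by
  by_cases hv : v = 0
  · subst hv; exact h.2.2 a ha
  · exact count_le_of_le a (h.2.1 v hv)

theorem Applicable.affordable (h : P.Applicable d R) (hr : r ∈ R) : P.Affordable d r :=
  fun a ha => by
    simp only [count_sum']
    exact Finset.sum_le_sum fun v _ =>
      (count_le_of_le a (consume_le_demand hr v)).trans (h.count_demand_le ha v)

theorem Affordable.mem_sum (h : P.Affordable d r) {a : Fin k} (ha : a ∉ P.E)
    (hr : a ∈ ∑ v, r.consume v) : a ∈ ∑ v, d v :=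
  count_pos.1 ((count_pos.2 hr).trans_le (h a ha))

theorem Step.count_sum_eq (h : P.Step d d') {a : Fin k} (ha : a ∉ P.E) :
    (∑ v, d' v).count a = (∑ v, d v).count a := by
  obtain ⟨R, ⟨happ, -⟩, -, rfl⟩ := h
  have hnode : ∀ v, (applySel d R v).count a + (demand R v).count a
      = (d v).count a + (supply R v).count a := fun v => by
    have := happ.count_demand_le ha v
    simp only [applySel, count_add, count_sub]
    omega
  have hflow := congrArg (count a) (sum_demand_eq_sum_supply R)
  have htotal := Finset.sum_congr rfl fun v (_ : v ∈ Finset.univ) => hnode v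
  simp only [Finset.sum_add_distrib] at htotal
  simp only [count_sum'] at hflow ⊢
  omega

theorem Reaches.count_sum_eq (h : P.Reaches d d') {a : Fin k} (ha : a ∉ P.E) :
    (∑ v, d' v).count a = (∑ v, d v).count a := by
  induction h with
  | refl => rfl
  | tail _ hstep ih => exact (hstep.count_sum_eq ha).trans ih

theorem Halted.not_enabled (h : P.Halted c) (hr : r ∈ P.rules)
    (hcell : ∀ v, v ≠ 0 → r.consume v ≤ c v)
    (henv : ∀ a ∉ P.E, (r.consume 0).count a ≤ (c 0).count a) : False :=
  h r hr ⟨by simpa using hr, by simpa [demand] using hcell, by simpa [demand] using henv⟩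

end TPSystem

theorem Fin.eq_zero_one_or_eq_one_zero_of_ne {i j : Fin 2} (h : i ≠ j) :
    i = 0 ∧ j = 1 ∨ i = 1 ∧ j = 0 := by
  fin_cases i <;> fin_cases j <;> simp_all

namespace TPSystem

section Potential

variable {k : ℕ}

def potential (β : Fin k → ℕ) (d : TConfig 1 k) : ℕ :=
  card (d 1) + ((d 0).map β).sum

def envWeight (P : TPSystem 1 k) (c : TConfig 1 k) (t : Fin k) : ℕ :=
  if t ∈ P.E then 0 else (if t ∈ c 0 then 0 else 1) + (if t ∈ c 1 then 1 else 0)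

variable {P : TPSystem 1 k} {β : Fin k → ℕ} {R : Multiset (TRule 1 k)} {r : TRule 1 k}
  {c d d' : TConfig 1 k}

theorem potential_add (d e : TConfig 1 k) :
    potential β (d + e) = potential β d + potential β e := by
  simp only [potential, Pi.add_apply, card_add, map_add, sum_add]
  ring

theorem potential_demand :
    potential β (demand R) = (R.map fun r => potential β r.consume).sum := by
  induction R using Multiset.induction_on with
  | empty => simp [potential, demand]
  | cons r R ih => simp [demand_cons, potential_add, ih]

theorem potential_supply :
    potential β (supply R) = (R.map fun r => potential β r.produce).sum := by
  induction R using Multiset.induction_on with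
  | empty => simp [potential, supply]
  | cons r R ih => simp [supply_cons, potential_add, ih]

theorem potential_init : potential β P.init = card (P.w 0) := by
  simp [potential, init]

theorem Step.potential_le (hβ : ∀ t ∈ P.E, β t = 0) (h : P.Step d d')
    (hrule : ∀ r ∈ P.rules, P.Affordable d r → potential β r.produce ≤ potential β r.consume) :
    potential β d' ≤ potential β d := by
  obtain ⟨R, ⟨happ, -⟩, -, rfl⟩ := h
  have hflow : potential β (supply R) ≤ potential β (demand R) := by
    rw [potential_supply, potential_demand]
    exact sum_map_le_sum_map _ _ fun r hr => hrule r (happ.1 r hr) (happ.affordable hr)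
  have hle : demand R 1 ≤ d 1 := happ.2.1 1 one_ne_zero
  have hcell : card (d 1 - demand R 1 + supply R 1) + card (demand R 1)
      = card (d 1) + card (supply R 1) := by
    rw [card_add, card_sub hle]
    have := card_le_card hle
    omega
  -- Copies of `E`-objects are taken from the environment with truncated subtraction; `hβ`
  -- makes them weightless.
  have henv := sum_map_tsub_add hβ (fun a ha => happ.2.2 a ha) (supply R 0)
  simp only [potential, applySel] at hflow ⊢
  omega

theorem Reaches.potential_le (hβ : ∀ t ∈ P.E, β t = 0) (hc : P.Reaches P.init c)
    (hrule : ∀ r ∈ P.rules, P.Affordable c r → potential β r.produce ≤ potential β r.consume) :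
    potential β c ≤ card (P.w 0) := by
  suffices ∀ d, P.Reaches P.init d → potential β d ≤ card (P.w 0) from this c hc
  intro d hd
  induction hd with
  | refl => exact potential_init.le
  | tail hd hstep ih =>
    refine (hstep.potential_le hβ fun r hr haff => hrule r hr fun a ha => ?_).trans ih
    rw [hc.count_sum_eq ha, ← Reaches.count_sum_eq hd ha]
    exact haff a ha

end Potential

section EnvWeight

variable {k : ℕ} {P : TPSystem 1 k} {c : TConfig 1 k} {t : Fin k}

theorem envWeight_eq_zero_of_mem_E (ht : t ∈ P.E) : P.envWeight c t = 0 := by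
  simp [envWeight, ht]

theorem envWeight_le_two : P.envWeight c t ≤ 2 := by
  unfold envWeight; split_ifs <;> omega

theorem envWeight_le_one (ht : t ∈ P.E ∨ t ∈ c 0) : P.envWeight c t ≤ 1 := by
  unfold envWeight; split_ifs <;> tauto

theorem envWeight_eq_zero (ht : t ∈ P.E ∨ t ∈ c 0) (h1 : t ∉ c 1) : P.envWeight c t = 0 := by
  unfold envWeight; split_ifs <;> tauto

theorem one_le_envWeight (hE : t ∉ P.E) (h1 : t ∈ c 1) : 1 ≤ P.envWeight c t := by
  unfold envWeight; split_ifs <;> simp_all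

theorem envWeight_eq_two (hE : t ∉ P.E) (h0 : t ∉ c 0) (h1 : t ∈ c 1) : P.envWeight c t = 2 := by
  simp [envWeight, hE, h0, h1]

theorem card_le_sum_envWeight {x : Multiset (Fin k)} (hx : card x ≤ 2) (hE : t ∉ P.E)
    (h0 : (c 0).count t < x.count t) (hx0 : x.count t ≤ (c 0).count t + (c 1).count t) :
    card x ≤ (x.map (P.envWeight c)).sum := by
  have hxt := count_le_card t x
  have h1 : t ∈ c 1 := count_pos.1 (by omega)
  have hmul : card x ≤ x.count t * P.envWeight c t := by
    by_cases ht0 : t ∈ c 0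
    · have := count_pos.2 ht0
      have := one_le_envWeight hE h1 (c := c)
      nlinarith
    · rw [envWeight_eq_two hE ht0 h1]
      omega
  rw [sum_map_eq_count_mul_add_filter_ne x t]
  omega

theorem sum_envWeight_le_card {x : Multiset (Fin k)} (hx : card x ≤ 2)
    (h1 : (c 1).count t < x.count t) (hx0 : t ∉ P.E → x.count t ≤ (c 0).count t + (c 1).count t) :
    (x.map (P.envWeight c)).sum ≤ card x := by
  have hE0 : t ∈ P.E ∨ t ∈ c 0 := or_iff_not_imp_left.2 fun hE => count_pos.1 (by grind)
  have hrest := sum_le_card_nsmul ((x.filter (· ≠ t)).map (P.envWeight c)) 2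
    fun _ hy => by obtain ⟨_, _, rfl⟩ := mem_map.1 hy; exact envWeight_le_two
  have hcard := card_eq_count_add_card_filter_ne x t
  rw [card_map, smul_eq_mul] at hrest
  rw [sum_map_eq_count_mul_add_filter_ne x t]
  by_cases hone : x.count t = 1
  · rw [hone, envWeight_eq_zero hE0 (count_eq_zero.1 (by omega))]
    omega
  · have := Nat.mul_le_mul_left (x.count t) (envWeight_le_one hE0 (c := c))
    omega

theorem envWeight_le_envWeight_of_antiport {u v : Fin k}
    (hstuck : u ∈ c 1 → v ∈ P.E ∨ v ∈ c 0 → False) (hu : u ∉ P.E → u ∈ c 0 ∨ u ∈ c 1)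
    (hv : v ∉ P.E → v ∈ c 0 ∨ v ∈ c 1) : P.envWeight c u ≤ P.envWeight c v := by
  by_cases hu1 : u ∈ c 1
  · have hvE : v ∉ P.E := fun h => hstuck hu1 (Or.inl h)
    have hv0 : v ∉ c 0 := fun h => hstuck hu1 (Or.inr h)
    rw [envWeight_eq_two hvE hv0 ((hv hvE).resolve_left hv0)]
    exact envWeight_le_two
  · rw [envWeight_eq_zero (by tauto) hu1]
    exact Nat.zero_le _

end EnvWeight

section Halting

variable {k : ℕ} {P : TPSystem 1 k} {c : TConfig 1 k}

theorem Halted.potential_le_of_import (hc : P.Halted c) {x : Multiset (Fin k)}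
    (hr : .sym 0 1 x ∈ P.rules) (hx : card x ≤ 2) (haff : P.Affordable c (.sym 0 1 x)) :
    potential (P.envWeight c) (TRule.sym 0 1 x).produce
      ≤ potential (P.envWeight c) (TRule.sym 0 1 x).consume := by
  obtain ⟨t, htE, ht⟩ : ∃ t ∉ P.E, (c 0).count t < x.count t := by
    by_contra! h
    exact hc.not_enabled hr (fun v hv => by simp [TRule.consume, Fin.eq_one_of_ne_zero v hv])
      (by simpa [TRule.consume] using h)
  have := card_le_sum_envWeight hx htE ht (by simpa [Affordable, TRule.consume] using haff t htE)
  simpa [potential, TRule.consume, TRule.produce] using this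

theorem Halted.potential_le_of_export (hc : P.Halted c) {x : Multiset (Fin k)}
    (hr : .sym 1 0 x ∈ P.rules) (hx : card x ≤ 2) (haff : P.Affordable c (.sym 1 0 x)) :
    potential (P.envWeight c) (TRule.sym 1 0 x).produce
      ≤ potential (P.envWeight c) (TRule.sym 1 0 x).consume := by
  obtain ⟨t, ht⟩ : ∃ t, (c 1).count t < x.count t := by
    by_contra! h
    exact hc.not_enabled hr
      (fun v hv => by simpa [TRule.consume, Fin.eq_one_of_ne_zero v hv] using le_iff_count.2 h)
      (by simp [TRule.consume])
  have := sum_envWeight_le_card hx ht (by simpa [Affordable, TRule.consume] using haff t)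
  simpa [potential, TRule.consume, TRule.produce] using this

theorem Halted.potential_le_of_exchange (hc : P.Halted c) {r : TRule 1 k} (hr : r ∈ P.rules)
    (haff : P.Affordable c r) {u v : Fin k} (hcell : r.consume 1 = {u}) (henv : r.consume 0 = {v})
    (hcell' : r.produce 1 = {v}) (henv' : r.produce 0 = {u}) :
    potential (P.envWeight c) r.produce ≤ potential (P.envWeight c) r.consume := by
  have hstuck : u ∈ c 1 → v ∈ P.E ∨ v ∈ c 0 → False := fun hu hv =>
    hc.not_enabled hr (fun i hi => by simpa [Fin.eq_one_of_ne_zero i hi, hcell] using hu)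
      fun a ha => by
        rw [henv, count_singleton]
        split_ifs with hav
        · subst hav; exact count_pos.2 (hv.resolve_left ha)
        · exact Nat.zero_le _
  have hpresent : ∀ t, t = u ∨ t = v → t ∉ P.E → t ∈ c 0 ∨ t ∈ c 1 := fun t ht htE => by
    simpa [Fin.sum_univ_two] using
      haff.mem_sum htE (by rcases ht with rfl | rfl <;> simp [Fin.sum_univ_two, henv, hcell])
  have := envWeight_le_envWeight_of_antiport hstuck (hpresent u (.inl rfl)) (hpresent v (.inr rfl))
  simp [potential, henv, hcell, henv', hcell', this]

theorem Halted.potential_produce_le (hc : P.Halted c) (hsym : P.SymBound 2)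
    (hanti : P.AntiBound 2) {r : TRule 1 k} (hr : r ∈ P.rules) (haff : P.Affordable c r) :
    potential (P.envWeight c) r.produce ≤ potential (P.envWeight c) r.consume := by
  have hok := P.rules_ok r hr
  cases r with
  | sym i j x =>
    have hx : card x ≤ 2 := hsym _ hr trivial
    rcases Fin.eq_zero_one_or_eq_one_zero_of_ne hok.1 with ⟨rfl, rfl⟩ | ⟨rfl, rfl⟩
    · exact hc.potential_le_of_import hr hx haff
    · exact hc.potential_le_of_export hr hx haff
  | anti i j x y =>
    have hxy : card x + card y ≤ 2 := hanti _ hr trivial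
    have := card_pos.2 hok.2.1
    have := card_pos.2 hok.2.2
    obtain ⟨a, rfl⟩ := card_eq_one.1 (by omega : card x = 1)
    obtain ⟨b, rfl⟩ := card_eq_one.1 (by omega : card y = 1)
    rcases Fin.eq_zero_one_or_eq_one_zero_of_ne hok.1 with ⟨rfl, rfl⟩ | ⟨rfl, rfl⟩
    · exact hc.potential_le_of_exchange hr haff (u := b) (v := a)
        (by simp [TRule.consume]) (by simp [TRule.consume]) (by simp [TRule.produce])
        (by simp [TRule.produce])
    · exact hc.potential_le_of_exchange hr haff (u := a) (v := b)
        (by simp [TRule.consume]) (by simp [TRule.consume]) (by simp [TRule.produce])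
        (by simp [TRule.produce])

theorem NSet_subset_Iic (hsym : P.SymBound 2) (hanti : P.AntiBound 2) :
    P.NSet ⊆ Set.Iic (card (P.w 0)) := by
  rintro _ ⟨c, hreach, hc, rfl⟩
  have hout : P.i0.succ = 1 := by rw [Fin.fin_one_eq_zero P.i0]; rfl
  calc card (c P.i0.succ) = card (c 1) := by rw [hout]
    _ ≤ potential (P.envWeight c) c := Nat.le_add_right _ _
    _ ≤ card (P.w 0) := hreach.potential_le (fun _ => envWeight_eq_zero_of_mem_E)
        fun _ hr haff => hc.potential_produce_le hsym hanti hr haff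

end Halting

theorem SymBound.mono {n k p q : ℕ} {P : TPSystem n k} (h : P.SymBound p) (hpq : p ≤ q) :
    P.SymBound q :=
  fun r hr hs => (h r hr hs).trans hpq

theorem SymOnly.antiBound {n k : ℕ} {P : TPSystem n k} (h : P.SymOnly) (q : ℕ) : P.AntiBound q := by
  intro r hr ha
  cases r with
  | sym => exact ha.elim
  | anti => exact (h _ hr).elim

end TPSystem

/-- `NOtP_1(sym_1, anti_2) ∪ NOtP_1(sym_2) ⊆ NFIN`: every set
of natural numbers computed by a tissue P system of degree 1 whose symport
rules have size at most 1 and whose antiport rules have size at most 2, or by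
a tissue P system of degree 1 using only symport rules of size at most 2, is
finite. -/
theorem NOtP_one_minimal_subset_NFIN : NOtP 1 1 2 ∪ NOtPsym 1 2 ⊆ NFIN := by
  rintro S (⟨m, hm1, hm2, k, P, hsym, hanti, rfl⟩ | ⟨m, hm1, hm2, k, P, hso, hsym, rfl⟩)
  · obtain rfl : m = 1 := le_antisymm hm2 hm1
    exact (Set.finite_Iic _).subset (P.NSet_subset_Iic (hsym.mono one_le_two) hanti)
  · obtain rfl : m = 1 := le_antisymm hm2 hm1
    exact (Set.finite_Iic _).subset (P.NSet_subset_Iic hsym (hso.antiBound 2))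
end
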